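/- In full System F with primitive disjunction, ∀X.((∀X∀Y.X⊃Y)⊃X)⊃((∃X.(∀X∀Y.X⊃Y)⊃X)⊃X)⊃X is derivable using only atomic instances of ∀E, where ∃X.C abbreviates ∀Y.(∀X.C⊃Y)⊃Y. Concretely, writing A = ∀X∀Y.X⊃Y and B = ∃X.(A⊃X), the formula (A∨B)* = ∀X.(A⊃X)⊃(B⊃X)⊃X is a theorem of atomic System F. -/
import Mathlib


/-- Formulas of second-order propositional logic with primitive disjunction:
variables, ⊃, ∨, ∀. -/
inductive Fm : Type
  | var : ℕ → Fm
  | imp : Fm → Fm → Fm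
  | or  : Fm → Fm → Fm
  | all : ℕ → Fm → Fm
deriving DecidableEq

namespace Fm

/-- `Free X A`: the variable `X` occurs free in `A`. -/
def Free (X : ℕ) : Fm → Prop
  | var Y => X = Y
  | imp A B => Free X A ∨ Free X B
  | or A B => Free X A ∨ Free X B
  | all Y A => X ≠ Y ∧ Free X A

/-- Substitution of `C` for the free occurrences of `X`. -/
def subst (X : ℕ) (C : Fm) : Fm → Fm
  | var Y => if X = Y then C else var Y
  | imp A B => imp (subst X C A) (subst X C B)
  | or A B => or (subst X C A) (subst X C B)
  | all Y A => if X = Y then all Y A else all Y (subst X C A)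

/-- `C` is substitutable (free) for `X` in the given formula (no capture). -/
def FreeFor (C : Fm) (X : ℕ) : Fm → Prop
  | var _ => True
  | imp A B => FreeFor C X A ∧ FreeFor C X B
  | or A B => FreeFor C X A ∧ FreeFor C X B
  | all Y A => (¬ Free X (all Y A)) ∨ (¬ Free Y C ∧ FreeFor C X A)

end Fm

/-- Natural deduction for second-order propositional logic with primitive
disjunction (the system `NI²∨`).  When `atomic = true` the witness of
∀-elimination must be a variable: this is the system `NI²∨_at`. -/
inductive Deriv (atomic : Bool) : Set Fm → Fm → Prop
  | ax {Γ A} : A ∈ Γ → Deriv atomic Γ A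
  | impI {Γ A B} : Deriv atomic (insert A Γ) B → Deriv atomic Γ (.imp A B)
  | impE {Γ A B} : Deriv atomic Γ (.imp A B) → Deriv atomic Γ A → Deriv atomic Γ B
  | orI1 {Γ A B} : Deriv atomic Γ A → Deriv atomic Γ (.or A B)
  | orI2 {Γ A B} : Deriv atomic Γ B → Deriv atomic Γ (.or A B)
  | orE {Γ A B C} : Deriv atomic Γ (.or A B) →
      Deriv atomic (insert A Γ) C → Deriv atomic (insert B Γ) C →
      Deriv atomic Γ C
  | allI {Γ X A} : Deriv atomic Γ A → (∀ B ∈ Γ, ¬ Fm.Free X B) →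
      Deriv atomic Γ (.all X A)
  | allE {Γ X A C} : Deriv atomic Γ (.all X A) → Fm.FreeFor C X A →
      (atomic = true → ∃ Y, C = Fm.var Y) →
      Deriv atomic Γ (Fm.subst X C A)

/-- `A = ∀X∀Y. X ⊃ Y`. -/
def A0 : Fm := .all 0 (.all 1 (.imp (.var 0) (.var 1)))

/-- `B = ∃X.(A⊃X)`, where `∃X.C` abbreviates `∀Y.(∀X.C⊃Y)⊃Y`. -/
def B0 : Fm := .all 1 (.imp (.all 0 (.imp (.imp A0 (.var 0)) (.var 1))) (.var 1))

/-- In System F with primitive disjunction, the Russell-Prawitz disjunction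
`(A∨B)* = ∀X.(A⊃X)⊃(B⊃X)⊃X` of `A = ∀X∀Y.X⊃Y` and `B = ∃X.A⊃X` is derivable
using only atomic instances of ∀E, i.e. it is a theorem of atomic System F. -/
theorem rp_or_theorem_atomic :
    Deriv true (∅ : Set Fm)
      (.all 0 (.imp (.imp A0 (.var 0)) (.imp (.imp B0 (.var 0)) (.var 0)))) := by
  apply Deriv.allI _ (by intro B hB; cases hB)
  apply Deriv.impI
  apply Deriv.impI
  -- context: p₂ = B0⊃0, p₁ = A0⊃0 ; goal : var 0
  apply Deriv.impE (Deriv.ax (Set.mem_insert _ _))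
  -- goal : B0
  apply Deriv.allI
  · apply Deriv.impI
    -- n : ∀0.((A0⊃0)⊃1) ; goal : var 1
    have h := Deriv.allE (atomic := true)
      (Γ := insert (.all 0 (.imp (.imp A0 (.var 0)) (.var 1)))
        (insert (.imp B0 (.var 0)) (insert (.imp A0 (.var 0)) (∅ : Set Fm))))
      (Deriv.ax (Set.mem_insert _ _))
      (C := Fm.var 0) (by simp [Fm.FreeFor, A0, Fm.Free]) (fun _ => ⟨0, rfl⟩)
    simp only [Fm.subst, A0] at h
    exact Deriv.impE h
      (Deriv.ax (Set.mem_insert_of_mem _ (Set.mem_insert_of_mem _ (Set.mem_insert _ _))))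
  · intro B hB
    rcases hB with rfl | hB
    · simp [Fm.Free, B0, A0]
    rcases hB with rfl | hB
    · simp [Fm.Free, A0]
    cases hB
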